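/- arXiv:2502.08258 — 5 statements merged into one kernel-verified Lean document; each statement's English description precedes it below -/
import Mathlib

section
/- Let k, x_v, y_v > 0 with x_v · y_v ≤ k, and consider a levered constant product AMM with invariant (x_a + x_v)(y_a + y_v) = k, where the actual balances satisfy x_a ≥ 0 and y_a ≥ 0. Then the marginal price p = (y_a + y_v)/(x_a + x_v) at every admissible state satisfies y_v²/k ≤ p ≤ k/x_v², with the lower bound attained exactly when y_a = 0 and the upper bound attained exactly when x_a = 0. -/
/-- For a levered constant product AMM with invariant `(x_a + x_v)(y_a + y_v) = k`
and actual balances `x_a, y_a ≥ 0`, the marginal price `(y_a + y_v)/(x_a + x_v)`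
lies between `y_v²/k` and `k/x_v²`, with the lower bound attained exactly when
`y_a = 0` and the upper bound attained exactly when `x_a = 0`. -/
theorem levered_amm_price_bounds (k xv yv : ℝ) (hk : 0 < k) (hxv : 0 < xv)
    (hyv : 0 < yv) (hle : xv * yv ≤ k)
    (xa ya : ℝ) (hxa : 0 ≤ xa) (hya : 0 ≤ ya)
    (hinv : (xa + xv) * (ya + yv) = k) :
    yv ^ 2 / k ≤ (ya + yv) / (xa + xv) ∧
    (ya + yv) / (xa + xv) ≤ k / xv ^ 2 ∧
    ((ya + yv) / (xa + xv) = yv ^ 2 / k ↔ ya = 0) ∧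
    ((ya + yv) / (xa + xv) = k / xv ^ 2 ↔ xa = 0) := by
  have hX : 0 < xa + xv := by linarith
  have hY : 0 < ya + yv := by linarith
  have h1 : (ya + yv) / (xa + xv) = (ya + yv) ^ 2 / k := by
    field_simp
    nlinarith [hinv]
  have h2 : (ya + yv) / (xa + xv) = k / (xa + xv) ^ 2 := by
    field_simp
    nlinarith [hinv]
  refine ⟨?_, ?_, ?_, ?_⟩
  · rw [h1]
    gcongr <;> linarith
  · rw [h2]
    gcongr
    linarith
  · rw [h1]
    constructor
    · intro h
      field_simp at h
      nlinarith [h, hya, hyv, sq_nonneg ya]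
    · rintro rfl; ring_nf
  · rw [h2]
    constructor
    · intro h
      field_simp at h
      nlinarith [h, hxa, hxv, sq_nonneg xa]
    · rintro rfl; norm_num
end

section
/- Let two fee-less constant product AMMs on the same token pair (X, Y) have positive reserves (x₁, y₁) and (x₂, y₂) with invariants k₁ = x₁y₁ and k₂ = x₂y₂, and suppose their marginal prices differ: y₁/x₁ > y₂/x₂. Then there exists δ > 0 (with δ < x₂ as needed for feasibility) such that depositing δ of token X into AMM 1, receiving w = y₁ − k₁/(x₁+δ) of token Y, and then depositing w into AMM 2 yields an amount x₂ − k₂/(y₂+w) of token X strictly greater than δ; that is, the round trip produces a strict risk-free profit in token X. -/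
/-- If two fee-less constant product AMMs on the same pair have different marginal
prices `y₁/x₁ > y₂/x₂`, then buying low and selling high yields a strict risk-free
profit: there is a `δ > 0` (with `δ < x₂`) such that depositing `δ` of X into AMM 1,
receiving `w = y₁ − k₁/(x₁+δ)` of Y, and depositing `w` into AMM 2 returns strictly
more than `δ` of token X. -/
theorem two_amms_different_prices_arbitrage (x₁ y₁ x₂ y₂ : ℝ)
    (hx₁ : 0 < x₁) (hy₁ : 0 < y₁) (hx₂ : 0 < x₂) (hy₂ : 0 < y₂)
    (hprice : y₂ / x₂ < y₁ / x₁) :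
    ∃ δ : ℝ, 0 < δ ∧ δ < x₂ ∧
      δ < x₂ - (x₂ * y₂) / (y₂ + (y₁ - (x₁ * y₁) / (x₁ + δ))) := by
  have hA : 0 < y₁ * x₂ - y₂ * x₁ := by
    have := (div_lt_div_iff₀ hx₂ hx₁).mp hprice
    nlinarith
  set δ : ℝ := (y₁ * x₂ - y₂ * x₁) / (2 * (y₁ + y₂)) with hδdef
  have hyy : 0 < y₁ + y₂ := by linarith
  have hδ : 0 < δ := div_pos hA (by linarith)
  have hδlt : δ < x₂ := by
    rw [hδdef, div_lt_iff₀ (by linarith)]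
    nlinarith
  refine ⟨δ, hδ, hδlt, ?_⟩
  have hx₁δ : 0 < x₁ + δ := by linarith
  have hw : y₁ - (x₁ * y₁) / (x₁ + δ) = y₁ * δ / (x₁ + δ) := by
    field_simp; ring
  rw [hw]
  have hw0 : 0 < y₁ * δ / (x₁ + δ) := div_pos (by positivity) hx₁δ
  have hden : 0 < y₂ + y₁ * δ / (x₁ + δ) := by linarith
  have key : y₂ * (x₁ + δ) < y₁ * (x₂ - δ) := by
    have hδval : δ * (y₁ + y₂) = (y₁ * x₂ - y₂ * x₁) / 2 := by
      rw [hδdef]; field_simp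
    nlinarith [hδval, hA]
  have goal2 : x₂ * y₂ < (x₂ - δ) * (y₂ + y₁ * δ / (x₁ + δ)) := by
    have h1 : (x₂ - δ) * (y₂ + y₁ * δ / (x₁ + δ))
        = ((x₂ - δ) * (y₂ * (x₁ + δ) + y₁ * δ)) / (x₁ + δ) := by
      field_simp
    rw [h1, lt_div_iff₀ hx₁δ]
    nlinarith [mul_pos hδ (sub_pos.mpr hδlt)]
  have := (div_lt_iff₀ hden).mpr goal2
  linarith
end

section
/- Let two fee-less constant product AMMs on the same token pair (X, Y) have positive reserves (x₁, y₁) and (x₂, y₂) with invariants k₁ = x₁y₁ and k₂ = x₂y₂, and suppose their marginal prices coincide: y₁/x₁ = y₂/x₂. Then no round trip is profitable: for every δ ∈ (−x₁, ∞) such that w = y₁ − k₁/(x₁+δ) satisfies y₂ + w > 0, the amount of token X returned by the second AMM satisfies x₂ − k₂/(y₂+w) ≤ δ, with equality only at δ = 0. -/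
/-- If two fee-less constant product AMMs on the same pair have equal marginal
prices `y₁/x₁ = y₂/x₂`, then no round trip is profitable: for any admissible `δ`,
the amount of token X returned by the second AMM is at most `δ`, with equality
only at `δ = 0`. -/
theorem two_amms_equal_prices_no_arbitrage (x₁ y₁ x₂ y₂ : ℝ)
    (hx₁ : 0 < x₁) (hy₁ : 0 < y₁) (hx₂ : 0 < x₂) (hy₂ : 0 < y₂)
    (hprice : y₁ / x₁ = y₂ / x₂) :
    ∀ δ : ℝ, -x₁ < δ → 0 < y₂ + (y₁ - (x₁ * y₁) / (x₁ + δ)) →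
      x₂ - (x₂ * y₂) / (y₂ + (y₁ - (x₁ * y₁) / (x₁ + δ))) ≤ δ ∧
      (x₂ - (x₂ * y₂) / (y₂ + (y₁ - (x₁ * y₁) / (x₁ + δ))) = δ → δ = 0) := by
  intro δ hδ hW
  have hxd : 0 < x₁ + δ := by linarith
  have cross : y₁ * x₂ = y₂ * x₁ := (div_eq_div_iff hx₁.ne' hx₂.ne').mp hprice
  set W : ℝ := y₂ + (y₁ - (x₁ * y₁) / (x₁ + δ)) with hWdef
  have hWx : W * (x₁ + δ) = y₂ * (x₁ + δ) + y₁ * δ := by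
    rw [hWdef, add_mul, sub_mul, div_mul_cancel₀ _ hxd.ne']
    ring
  constructor
  · have h1 : (x₂ - δ) * W ≤ x₂ * y₂ := by
      have h2 : ((x₂ - δ) * W) * (x₁ + δ) ≤ (x₂ * y₂) * (x₁ + δ) := by
        calc ((x₂ - δ) * W) * (x₁ + δ) = (x₂ - δ) * (W * (x₁ + δ)) := by ring
        _ = (x₂ - δ) * (y₂ * (x₁ + δ) + y₁ * δ) := by rw [hWx]
        _ ≤ (x₂ * y₂) * (x₁ + δ) := by nlinarith [sq_nonneg δ]
      exact le_of_mul_le_mul_right h2 hxd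
    have h3 : x₂ - δ ≤ x₂ * y₂ / W := (le_div_iff₀ hW).mpr h1
    linarith
  · intro heq
    have h1 : (x₂ - δ) * W = x₂ * y₂ := by
      have : x₂ - δ = (x₂ * y₂) / W := by linarith
      field_simp [hW.ne'] at this
      linarith [this]
    have h2 : (y₁ + y₂) * δ ^ 2 = 0 := by
      have h3 : (x₂ - δ) * (W * (x₁ + δ)) = (x₂ * y₂) * (x₁ + δ) := by rw [← mul_assoc, h1]
      rw [hWx] at h3
      nlinarith [h3, cross]
    have hδ2 : δ ^ 2 = 0 := by
      rcases mul_eq_zero.mp h2 with h | h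
      · linarith
      · exact h
    exact pow_eq_zero_iff (n := 2) (by norm_num) |>.mp hδ2
end

section
/- Consider three fee-less constant product AMMs forming a loop on three tokens: AMM ν (ν = 1, 2, 3) has positive reserves (x_ν, y_ν) with invariant k_ν = x_ν y_ν, where AMM 1 converts token 1 into token 2, AMM 2 converts token 2 into token 3, and AMM 3 converts token 3 into token 1, each via the output rule out_ν(u) = y_ν − k_ν/(x_ν + u). If the product of marginal prices around the loop satisfies (y₁/x₁)·(y₂/x₂)·(y₃/x₃) > 1, then there exists δ > 0 such that g(δ) = out₃(out₂(out₁(δ))) > δ, i.e. trading a sufficiently small amount of token 1 around the loop yields a strict arbitrage profit in token 1. -/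
/-!
Away from its pole, a constant product AMM acts on trade sizes as the linear fractional map
`u ↦ p u / (1 + q u)` with `p = y/x` its marginal price. These maps compose as
`(p₂, q₂) ∘ (p₁, q₁) = (p₂ p₁, q₁ + q₂ p₁)`, so the whole loop is `δ ↦ P δ / (1 + Q δ)` with
`P` the circular price product and `Q ≥ 0`; when `P > 1` it exceeds `δ` for all `0 < δ < (P - 1)/Q`.
-/

noncomputable def cpmmOut (x y u : ℝ) : ℝ := y - x * y / (x + u)

noncomputable def fracLin (p q u : ℝ) : ℝ := p * u / (1 + q * u)

lemma fracLin_nonneg {p q u : ℝ} (hp : 0 ≤ p) (hq : 0 ≤ q) (hu : 0 ≤ u) : 0 ≤ fracLin p q u := by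
  unfold fracLin
  positivity

lemma cpmmOut_eq_fracLin {x u : ℝ} (y : ℝ) (hx : x ≠ 0) (hu : x + u ≠ 0) :
    cpmmOut x y u = fracLin (y / x) (1 / x) u := by
  unfold cpmmOut fracLin
  field_simp
  ring

lemma fracLin_fracLin {q₁ u : ℝ} (p₁ p₂ q₂ : ℝ) (hu : 1 + q₁ * u ≠ 0) :
    fracLin p₂ q₂ (fracLin p₁ q₁ u) = fracLin (p₂ * p₁) (q₁ + q₂ * p₁) u := by
  unfold fracLin
  have hden : 1 + q₂ * (p₁ * u / (1 + q₁ * u)) = (1 + (q₁ + q₂ * p₁) * u) / (1 + q₁ * u) := by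
    rw [eq_div_iff hu, add_mul, mul_assoc q₂, div_mul_cancel₀ _ hu]
    ring
  rw [hden, mul_div_assoc', div_div_div_cancel_right₀ hu, mul_assoc]

lemma exists_pos_lt_fracLin {p q : ℝ} (hp : 1 < p) (hq : 0 ≤ q) : ∃ δ > 0, δ < fracLin p q δ := by
  refine ⟨(p - 1) / (q + 1), by apply div_pos <;> linarith, ?_⟩
  unfold fracLin
  rw [lt_div_iff₀ (by positivity)]
  field_simp
  nlinarith

lemma cpmmOut_fracLin {x p q u : ℝ} (y : ℝ) (hx : 0 < x) (hp : 0 ≤ p) (hq : 0 ≤ q) (hu : 0 ≤ u) :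
    cpmmOut x y (fracLin p q u) = fracLin (y / x * p) (q + 1 / x * p) u := by
  have hv := fracLin_nonneg hp hq hu
  rw [cpmmOut_eq_fracLin y hx.ne' (by positivity), fracLin_fracLin p _ _ (by positivity)]

theorem triangular_arbitrage_general (x₁ y₁ x₂ y₂ x₃ y₃ : ℝ)
    (hx₁ : 0 < x₁) (hy₁ : 0 < y₁) (hx₂ : 0 < x₂) (hy₂ : 0 < y₂)
    (hx₃ : 0 < x₃)
    (hloop : 1 < (y₁ / x₁) * (y₂ / x₂) * (y₃ / x₃)) :
    ∃ δ : ℝ, 0 < δ ∧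
      δ < y₃ - (x₃ * y₃) /
        (x₃ + (y₂ - (x₂ * y₂) / (x₂ + (y₁ - (x₁ * y₁) / (x₁ + δ))))) := by
  have hP : 1 < y₃ / x₃ * (y₂ / x₂ * (y₁ / x₁)) := by rwa [mul_comm, mul_comm (y₂ / x₂)]
  obtain ⟨δ, hδ, hgain⟩ := exists_pos_lt_fracLin hP
    (q := 1 / x₁ + 1 / x₂ * (y₁ / x₁) + 1 / x₃ * (y₂ / x₂ * (y₁ / x₁))) (by positivity)
  refine ⟨δ, hδ, ?_⟩
  change δ < cpmmOut x₃ y₃ (cpmmOut x₂ y₂ (cpmmOut x₁ y₁ δ))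
  rwa [cpmmOut_eq_fracLin y₁ hx₁.ne' (by positivity),
    cpmmOut_fracLin y₂ hx₂ (by positivity) (by positivity) hδ.le,
    cpmmOut_fracLin y₃ hx₃ (by positivity) (by positivity) hδ.le]

/-- Three fee-less constant product AMMs form a loop on three tokens, AMM ν having
reserves `(x_ν, y_ν)` and output rule `u ↦ y_ν − x_ν y_ν/(x_ν + u)`. If the product
of marginal prices around the loop exceeds 1, then some small amount `δ > 0` of
token 1 traded around the loop returns strictly more than `δ`. -/
theorem triangular_arbitrage (x₁ y₁ x₂ y₂ x₃ y₃ : ℝ)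
    (hx₁ : 0 < x₁) (hy₁ : 0 < y₁) (hx₂ : 0 < x₂) (hy₂ : 0 < y₂)
    (hx₃ : 0 < x₃) (hy₃ : 0 < y₃)
    (hloop : 1 < (y₁ / x₁) * (y₂ / x₂) * (y₃ / x₃)) :
    ∃ δ : ℝ, 0 < δ ∧
      δ < y₃ - (x₃ * y₃) /
        (x₃ + (y₂ - (x₂ * y₂) / (x₂ + (y₁ - (x₁ * y₁) / (x₁ + δ))))) :=
  triangular_arbitrage_general x₁ y₁ x₂ y₂ x₃ y₃ hx₁ hy₁ hx₂ hy₂ hx₃ hloop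
end

section
/- Let f : ℝ → ℝ be convex and differentiable with f′(x) > 0 for all x, and suppose f has a root r (so f(r) = 0, and r is the unique root since f is strictly increasing). Then for every starting point x₀ ∈ ℝ, the Newton-Raphson iterates x_{n+1} = x_n − f(x_n)/f′(x_n) are well defined and converge to r. -/
/-- Tangent line lies below a convex differentiable function. -/
lemma tangent_le_convex (f : ℝ → ℝ) (hconv : ConvexOn ℝ Set.univ f)
    (hdiff : Differentiable ℝ f) (a y : ℝ) :
    f a + deriv f a * (y - a) ≤ f y := by
  rcases lt_trichotomy a y with h | h | h
  · have := hconv.deriv_le_slope (Set.mem_univ a) (Set.mem_univ y) h (hdiff a)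
    rw [slope_def_field] at this
    have hya : 0 < y - a := by linarith
    have h2 := (le_div_iff₀ hya).mp this
    linarith
  · simp [h]
  · have := hconv.slope_le_deriv (Set.mem_univ y) (Set.mem_univ a) h (hdiff a)
    rw [slope_def_field] at this
    have hay : 0 < a - y := by linarith
    nlinarith [(div_le_iff₀ hay).mp this]

/-- Newton-Raphson on a convex, differentiable, strictly increasing
(`f′ > 0` everywhere) function with a root `r`: from every starting point the
iterates converge to `r`. -/
theorem newton_converges_convex_increasing (f : ℝ → ℝ)
    (hconv : ConvexOn ℝ Set.univ f) (hdiff : Differentiable ℝ f)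
    (hderiv : ∀ x, 0 < deriv f x) (r : ℝ) (hr : f r = 0)
    (x : ℕ → ℝ) (hstep : ∀ n, x (n + 1) = x n - f (x n) / deriv f (x n)) :
    Filter.Tendsto x Filter.atTop (nhds r) := by
  have hmono : StrictMono f :=
    strictMono_of_deriv_pos hderiv
  -- all iterates from step 1 are ≥ r
  have hge : ∀ n, r ≤ x (n + 1) := by
    intro n
    have ht := tangent_le_convex f hconv hdiff (x n) r
    rw [hr] at ht
    have hd := hderiv (x n)
    rw [hstep n]
    have : deriv f (x n) * (r - x n) ≤ - f (x n) := by linarith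
    have h2 : r - x n ≤ - f (x n) / deriv f (x n) := by
      rw [le_div_iff₀ hd]; linarith [this]
    have h3 : - f (x n) / deriv f (x n) = -(f (x n) / deriv f (x n)) := neg_div _ _
    linarith
  -- f nonneg on iterates
  have hfge : ∀ n, 0 ≤ f (x (n + 1)) := by
    intro n
    rw [← hr]
    exact hmono.monotone (hge n)
  -- y := shifted sequence is antitone
  set y : ℕ → ℝ := fun n => x (n + 1) with hy
  have hanti : Antitone y := by
    apply antitone_nat_of_succ_le
    intro n
    have hd := hderiv (x (n + 1))
    have : 0 ≤ f (x (n + 1)) / deriv f (x (n + 1)) :=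
      div_nonneg (hfge n) hd.le
    simp only [hy, hstep (n + 1)]
    linarith
  have hbdd : BddBelow (Set.range y) := ⟨r, by rintro _ ⟨n, rfl⟩; exact hge n⟩
  set L := ⨅ n, y n with hL
  have hylim : Filter.Tendsto y Filter.atTop (nhds L) :=
    tendsto_atTop_ciInf hanti hbdd
  have hLr : r ≤ L := le_ciInf fun n => hge n
  -- f (y n) tends to 0
  have hyle : ∀ n, y n ≤ y 0 := fun n => hanti (Nat.zero_le n)
  have hdmono := hconv.monotoneOn_deriv (fun z _ => hdiff z)
  have hfbound : ∀ n, f (y n) ≤ deriv f (y 0) * (y n - y (n + 1)) := by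
    intro n
    have hd := hderiv (y n)
    have heq : y (n + 1) = y n - f (y n) / deriv f (y n) := hstep (n + 1)
    have h1 : f (y n) = deriv f (y n) * (y n - y (n + 1)) := by
      rw [heq]; field_simp; ring
    have h2 : deriv f (y n) ≤ deriv f (y 0) :=
      hdmono (Set.mem_univ _) (Set.mem_univ _) (hyle n)
    have h3 : 0 ≤ y n - y (n + 1) := by linarith [hanti (Nat.le_succ n)]
    calc f (y n) = deriv f (y n) * (y n - y (n + 1)) := h1
      _ ≤ deriv f (y 0) * (y n - y (n + 1)) := by nlinarith
  have hrhs : Filter.Tendsto (fun n => deriv f (y 0) * (y n - y (n + 1)))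
      Filter.atTop (nhds 0) := by
    have h1 : Filter.Tendsto (fun n => y (n + 1)) Filter.atTop (nhds L) :=
      hylim.comp (Filter.tendsto_add_atTop_nat 1)
    have := ((hylim.sub h1).const_mul (deriv f (y 0)))
    simpa using this
  have hfy : Filter.Tendsto (fun n => f (y n)) Filter.atTop (nhds (f L)) :=
    ((hdiff.continuous.tendsto L).comp hylim)
  have hfL_le : f L ≤ 0 :=
    le_of_tendsto_of_tendsto hfy hrhs (Filter.Eventually.of_forall hfbound)
  have hfL_ge : 0 ≤ f L := hr ▸ hmono.monotone hLr
  have hLr' : L = r := (hmono.injective (by linarith : f L = f r)).symm ▸ rfl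
  rw [hLr'] at hylim
  exact (Filter.tendsto_add_atTop_iff_nat 1).mp hylim
end
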